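/- arXiv:1803.06448 — 3 statements merged into one kernel-verified Lean document; each statement's English description precedes it below -/
import Mathlib

section
/- Let K, M be positive integers, D = KM, and let g ∈ ℂ^D be a prototype filter whose frequency-domain version g_f = √D · W_D · g satisfies g_f = Π_D^l · [g_1^T, 0^T_{(K−1)M}]^T for some g_1 ∈ ℂ^M and integer 0 ≤ l < D. Then the GFDM transmitter matrix A satisfies Π_D^{−l} · W_D · A = (1/√K) · Π_{KM} · ( diag(g_1) · Π_M^{−l} · W_M ⊗ I_K ), where ⊗ denotes the Kronecker product. -/
open Matrix Complex

noncomputable section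

/-- The normalized `p`-point DFT matrix `W_p`,
with `[W_p]_{m,n} = exp(-2πi m n / p) / √p`. -/
def dftMat (p : ℕ) : Matrix (Fin p) (Fin p) ℂ :=
  Matrix.of fun m n =>
    Complex.exp (-2 * (Real.pi : ℂ) * Complex.I * (m.val : ℂ) * (n.val : ℂ) / (p : ℂ)) /
      ((Real.sqrt p : ℝ) : ℂ)

/-- `Π_A^s`, the `s`-th (integer) power of the `A×A` cyclic-shift permutation matrix
`Π_A` (whose `(m,n)` entry is `1` iff `m ≡ n+1 (mod A)`).  In general the `(m,n)` entry of
`Π_A^s` is `1` iff `m ≡ n + s (mod A)`; in particular `Π_A = cycPow A 1` and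
`Π_A^{-s} = cycPow A (-s)`. -/
def cycPow (A : ℕ) (s : ℤ) : Matrix (Fin A) (Fin A) ℂ :=
  Matrix.of fun m n => if (m.val : ZMod A) = (n.val : ZMod A) + (s : ZMod A) then 1 else 0

/-- The `AB×AB` permutation matrix `Π_{AB}` with
`[Π_{AB}]_{mB+p, qA+n} = δ_{mn} δ_{pq}` for `0 ≤ m,n < A`, `0 ≤ p,q < B`. -/
def piAB (A B : ℕ) : Matrix (Fin (A * B)) (Fin (A * B)) ℂ :=
  Matrix.of fun i j => if i.val / B = j.val % A ∧ i.val % B = j.val / A then 1 else 0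

/-- Kronecker product, with flat (`Fin (a*c)`) indexing:
`(X ⊗ Y)_{i c + p, j d + q} = X_{i,j} Y_{p,q}`. -/
def kron {a b c d : ℕ} (X : Matrix (Fin a) (Fin b) ℂ) (Y : Matrix (Fin c) (Fin d) ℂ) :
    Matrix (Fin (a * c)) (Fin (b * d)) ℂ :=
  Matrix.of fun i j => X i.divNat j.divNat * Y i.modNat j.modNat

/-- The `R×T` block matrix with blocks `E r t` of size `a×b`, flatly indexed:
block `(r,t)` occupies rows `r*a,…,r*a+a-1` and columns `t*b,…,t*b+b-1`. -/
def blockFlat {R T a b : ℕ} (E : Fin R → Fin T → Matrix (Fin a) (Fin b) ℂ) :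
    Matrix (Fin (R * a)) (Fin (T * b)) ℂ :=
  Matrix.of fun i j => E i.divNat j.divNat i.modNat j.modNat

/-- The block-diagonal matrix `blkdiag({F_k}_{k=0}^{K-1})` whose `k`-th diagonal
block is the `a×b` matrix `F k`. -/
def blkdiag {K a b : ℕ} (F : Fin K → Matrix (Fin a) (Fin b) ℂ) :
    Matrix (Fin (K * a)) (Fin (K * b)) ℂ :=
  Matrix.of fun i j => if i.divNat = j.divNat then F i.divNat i.modNat j.modNat else 0

/-- Index-value-preserving cast between matrix dimensions. -/
def castM {a b c d : ℕ} (h1 : a = c) (h2 : b = d) (X : Matrix (Fin a) (Fin b) ℂ) :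
    Matrix (Fin c) (Fin d) ℂ :=
  Matrix.reindex (finCongr h1) (finCongr h2) X

/-- The length-`D` vector `[g₁ᵀ, 0ᵀ]ᵀ` obtained by padding `g₁ ∈ ℂ^M` with zeros. -/
def pad (D M : ℕ) (g1 : Fin M → ℂ) : Fin D → ℂ :=
  fun i => if h : i.val < M then g1 ⟨i.val, h⟩ else 0

/-- The `k`-th length-`a` segment of a vector `v ∈ ℂ^{K a}`:
`(seg v k) i = v (k*a + i)`. -/
def seg {K a : ℕ} (v : Fin (K * a) → ℂ) (k : Fin K) : Fin a → ℂ :=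
  fun i => v ⟨k.val * a + i.val, by
    have hk := k.isLt
    have hi := i.isLt
    calc k.val * a + i.val < k.val * a + a := by omega
      _ = (k.val + 1) * a := by ring
      _ ≤ K * a := Nat.mul_le_mul_right a hk⟩

/-- The GFDM transmitter matrix of the prototype filter `g ∈ ℂ^{KM}`:
`[A]_{n, mK+k} = [g]_{(n-mK) mod D} · exp(2πi k n / K)` with `D = K M`. -/
def gfdm (K M : ℕ) (hK : 0 < K) (hM : 0 < M) (g : Fin (K * M) → ℂ) :
    Matrix (Fin (K * M)) (Fin (K * M)) ℂ :=
  Matrix.of fun n j =>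
    g ⟨(n.val + K * M - (j.val / K) * K) % (K * M), Nat.mod_lt _ (Nat.mul_pos hK hM)⟩ *
      Complex.exp (2 * (Real.pi : ℂ) * Complex.I * ((j.val % K : ℕ) : ℂ) * (n.val : ℂ) / (K : ℂ))

/-!
Column `mK + k` of `A` is the cyclic shift by `mK` of `g`, modulated by the character
`n ↦ exp(2πi kMn / D)` of `ZMod D`. The DFT exchanges the two operations, so column `mK + k` of
`W_D A` is `W_D g` shifted by `kM` and multiplied by the phase `exp(-2πi r mK / D)`. By hypothesis
`W_D g` is `g₁` padded with zeros and shifted by `l`, so after undoing the shift by `l` the column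
is supported on the `k`-th block of `M` rows, where it carries `g₁` times
`exp(-2πi (r + l) m / M)`, an entry of `Π_M^{-l} W_M`; the permutation `Π_{KM}` puts the blocks
in Kronecker order.
-/

namespace GFDM

open ZMod (stdAddChar stdAddChar_coe)

section Cyclic

variable {A : ℕ}

lemma natCast_inj_of_lt {a b : ℕ} (ha : a < A) (hb : b < A) : (a : ZMod A) = b ↔ a = b := by
  rw [ZMod.natCast_eq_natCast_iff', Nat.mod_eq_of_lt ha, Nat.mod_eq_of_lt hb]

lemma natCast_val_inj {a b : Fin A} : (a.val : ZMod A) = b.val ↔ a = b :=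
  (natCast_inj_of_lt a.isLt b.isLt).trans Fin.val_inj

lemma natCast_val_add (a b : Fin A) : (((a + b : Fin A) : ℕ) : ZMod A) = a.val + b.val := by
  rw [Fin.val_add, ZMod.natCast_mod, Nat.cast_add]

lemma exists_natCast_val_eq [NeZero A] (x : ZMod A) : ∃ u : Fin A, (u.val : ZMod A) = x :=
  ⟨⟨x.val, x.val_lt⟩, ZMod.natCast_zmod_val x⟩

lemma cycPow_dotProduct (s : ℤ) (v : Fin A → ℂ) {i j : Fin A}
    (hj : (j.val : ZMod A) = i.val - s) : cycPow A s i ⬝ᵥ v = v j := by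
  have hrow : ∀ n, cycPow A s i n = if n = j then 1 else 0 := fun n => by
    simp only [cycPow, of_apply, ← natCast_val_inj, hj, eq_comm (a := (n.val : ZMod A)),
      sub_eq_iff_eq_add]
  simp [dotProduct, hrow]

lemma cycPow_mulVec_apply (s : ℤ) (v : Fin A → ℂ) {i j : Fin A}
    (hj : (j.val : ZMod A) = i.val - s) : (cycPow A s *ᵥ v) i = v j :=
  cycPow_dotProduct s v hj

lemma cycPow_mul_apply (s : ℤ) (X : Matrix (Fin A) (Fin A) ℂ) {i j : Fin A}
    (hj : (j.val : ZMod A) = i.val - s) (c : Fin A) : (cycPow A s * X) i c = X j c :=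
  cycPow_dotProduct s _ hj

end Cyclic

lemma stdAddChar_intCast_mul {N a b : ℕ} [NeZero N] [NeZero b] (hN : N = a * b) (z : ℤ) :
    stdAddChar ((a * z : ℤ) : ZMod N) = stdAddChar (z : ZMod b) := by
  have ha : (a : ℂ) ≠ 0 := by
    rintro h
    exact NeZero.ne N (by rw [hN, Nat.cast_eq_zero.mp h, zero_mul])
  rw [stdAddChar_coe, stdAddChar_coe, hN]
  congr 1
  push_cast
  field_simp

section DFT

variable {D : ℕ} [NeZero D]

lemma dftMat_apply (m n : Fin D) :
    dftMat D m n = stdAddChar (-(m.val * n.val : ZMod D)) / √(D : ℝ) := by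
  rw [dftMat, of_apply, ← Int.cast_natCast (R := ZMod D), ← Int.cast_natCast (R := ZMod D) n.val,
    ← Int.cast_mul, ← Int.cast_neg, stdAddChar_coe]
  push_cast
  ring_nf

lemma dftMat_mulVec_modulate_shift (v : Fin D → ℂ) (s : Fin D) (t : ZMod D) {r u : Fin D}
    (hu : (u.val : ZMod D) = r.val - t) :
    (dftMat D *ᵥ fun n => stdAddChar (t * (n.val : ZMod D)) * v (n - s)) r =
      stdAddChar (-(u.val * s.val : ZMod D)) * (dftMat D *ᵥ v) u := by
  simp only [mulVec, dotProduct, Finset.mul_sum]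
  rw [← Equiv.sum_comp (Equiv.addRight s)]
  refine Finset.sum_congr rfl fun n _ => ?_
  simp only [Equiv.coe_addRight, add_sub_cancel_right, dftMat_apply, natCast_val_add]
  have hphase : stdAddChar (-(r.val * (n.val + s.val) : ZMod D)) *
        stdAddChar (t * (n.val + s.val : ZMod D)) =
      stdAddChar (-(u.val * s.val : ZMod D)) * stdAddChar (-(u.val * n.val : ZMod D)) := by
    rw [← AddChar.map_add_eq_mul, ← AddChar.map_add_eq_mul, hu]
    ring_nf
  linear_combination v n / √(D : ℝ) * hphase

lemma dftMat_mulVec_apply_of_smul_eq_cycPow_mulVec {g v : Fin D → ℂ} {l : ℤ}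
    (hgv : ((√(D : ℝ) : ℝ) : ℂ) • dftMat D *ᵥ g = cycPow D l *ᵥ v) {u w : Fin D}
    (hw : (w.val : ZMod D) = u.val - l) : (dftMat D *ᵥ g) u = v w / √(D : ℝ) := by
  have hD : ((√(D : ℝ) : ℝ) : ℂ) ≠ 0 :=
    Complex.ofReal_ne_zero.mpr (Real.sqrt_ne_zero'.mpr (Nat.cast_pos.mpr (NeZero.pos D)))
  rw [← cycPow_mulVec_apply l v hw, ← hgv, Pi.smul_apply, smul_eq_mul, mul_div_cancel_left₀ _ hD]

end DFT

section Blocks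

variable {K M : ℕ}

lemma div_mul_lt_mul (c : Fin (K * M)) : c.val / K * K < K * M :=
  (Nat.div_mul_le_self _ _).trans_lt c.isLt

lemma gfdm_apply [NeZero K] [NeZero M] (g : Fin (K * M) → ℂ) (n c : Fin (K * M)) :
    gfdm K M (NeZero.pos K) (NeZero.pos M) g n c =
      stdAddChar ((M : ZMod (K * M)) * ((c.val % K : ℕ) : ZMod (K * M)) * (n.val : ZMod (K * M))) *
        g (n - ⟨c.val / K * K, div_mul_lt_mul c⟩) := by
  have hmod : stdAddChar ((M * ((c.val % K * n.val : ℕ) : ℤ) : ℤ) : ZMod (K * M))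
      = Complex.exp (2 * Real.pi * Complex.I * ((c.val % K : ℕ) : ℂ) * n.val / K) := by
    rw [stdAddChar_intCast_mul (Nat.mul_comm K M), stdAddChar_coe, Int.cast_natCast, Nat.cast_mul]
    ring_nf
  rw [gfdm, of_apply, mul_comm, ← hmod]
  congr 2
  · simp only [Int.cast_mul, Int.cast_natCast, Nat.cast_mul]
    ring
  · ext
    simp only [Fin.val_sub]
    congr 1
    have := div_mul_lt_mul c
    omega

lemma stdAddChar_block_phase [NeZero K] [NeZero M] (a k m : ℕ) :
    stdAddChar (-(((a : ZMod (K * M)) - (M : ZMod (K * M)) * (k : ZMod (K * M))) *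
        ((m * K : ℕ) : ZMod (K * M)))) =
      stdAddChar (-((a : ZMod M) * (m : ZMod M))) := by
  have hKM : (K : ZMod (K * M)) * M = 0 := by exact_mod_cast ZMod.natCast_self (K * M)
  have hlift : -(((a : ZMod (K * M)) - (M : ZMod (K * M)) * (k : ZMod (K * M))) *
      ((m * K : ℕ) : ZMod (K * M))) =
      ((K * -(a * m : ℤ) : ℤ) : ZMod (K * M)) := by
    push_cast
    linear_combination (k * m : ZMod (K * M)) * hKM
  rw [hlift, stdAddChar_intCast_mul rfl]
  push_cast
  rfl

lemma pad_apply_of_natCast_eq [NeZero M] (g1 : Fin M → ℂ) {k : ℕ} (hk : k < K)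
    {r w : Fin (K * M)} (hw : (w.val : ZMod (K * M)) = r.val - M * k) :
    pad (K * M) M g1 w =
      if r.val / M = k then g1 ⟨r.val % M, Nat.mod_lt _ (NeZero.pos M)⟩ else 0 := by
  have hMk : M * k + M ≤ K * M := by nlinarith
  have hrM := Nat.div_add_mod r.val M
  have hsum : ((w.val + M * k : ℕ) : ZMod (K * M)) = r.val := by
    push_cast
    rw [hw]
    ring
  have hblock : w.val < M → w.val + M * k = r.val := fun hwM =>
    (natCast_inj_of_lt (by omega) r.isLt).mp hsum
  have hoffset : r.val / M = k → w.val = r.val % M := by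
    intro hrk
    have hrem : ((r.val % M : ℕ) : ZMod (K * M)) = r.val - M * k := by
      rw [eq_sub_iff_add_eq, ← hrk]
      exact_mod_cast congrArg (Nat.cast : ℕ → ZMod (K * M))
        (by omega : r.val % M + M * (r.val / M) = r.val)
    exact (natCast_inj_of_lt w.isLt (by omega)).mp (hw.trans hrem.symm)
  have hiff : w.val < M ↔ r.val / M = k := by
    constructor
    · intro hwM
      rw [← hblock hwM, Nat.add_mul_div_left _ _ (NeZero.pos M), Nat.div_eq_of_lt hwM, zero_add]
    · intro hrk
      rw [hoffset hrk]
      exact Nat.mod_lt _ (NeZero.pos M)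
  unfold pad
  by_cases hrk : r.val / M = k
  · rw [dif_pos (hiff.mpr hrk), if_pos hrk]
    congr 1
    exact Fin.ext (hoffset hrk)
  · rw [dif_neg (mt hiff.mp hrk), if_neg hrk]

lemma mod_mul_add_div_lt [NeZero M] (r : Fin (K * M)) : r.val % M * K + r.val / M < K * M := by
  have hq : r.val / M < K := Nat.div_lt_of_lt_mul (Nat.mul_comm K M ▸ r.isLt)
  have hp : r.val % M + 1 ≤ M := Nat.mod_lt _ (NeZero.pos M)
  nlinarith

lemma piAB_mul_castM_kron_one_apply [NeZero M] (B : Matrix (Fin M) (Fin M) ℂ)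
    (r c : Fin (K * M)) :
    (piAB K M * castM (Nat.mul_comm M K) (Nat.mul_comm M K) (kron B (1 : Matrix (Fin K) (Fin K) ℂ)))
      r c = if r.val / M = c.val % K then
        B ⟨r.val % M, Nat.mod_lt _ (NeZero.pos M)⟩ ⟨c.val / K, Nat.div_lt_of_lt_mul c.isLt⟩
      else 0 := by
  have hq : r.val / M < K := Nat.div_lt_of_lt_mul (Nat.mul_comm K M ▸ r.isLt)
  set j : Fin (K * M) := ⟨r.val % M * K + r.val / M, mod_mul_add_div_lt r⟩
  have hjdiv : j.val / K = r.val % M := by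
    simp only [j]
    rw [add_comm, Nat.add_mul_div_right _ _ (Nat.zero_lt_of_lt hq), Nat.div_eq_of_lt hq, zero_add]
  have hjmod : j.val % K = r.val / M := by
    simp only [j]
    rw [Nat.add_mod, Nat.mul_mod_left, zero_add, Nat.mod_mod, Nat.mod_eq_of_lt hq]
  have hrow : ∀ i, piAB K M r i = if i = j then 1 else 0 := fun i => by
    refine if_congr ?_ rfl rfl
    rw [Fin.ext_iff, Nat.ext_div_modEq_iff K i.val j.val, Nat.ModEq, hjdiv, hjmod]
    omega
  rw [mul_apply', dotProduct]
  simp only [hrow, ite_mul, one_mul, zero_mul, Finset.sum_ite_eq', Finset.mem_univ, if_true]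
  simp only [castM, reindex_apply, submatrix_apply, kron, of_apply, one_apply, mul_ite, mul_one,
    mul_zero, Fin.ext_iff, Fin.coe_modNat, finCongr_symm, finCongr_apply, Fin.val_cast]
  refine if_congr (by rw [hjmod]) ?_ rfl
  congr 1
  exact Fin.ext hjdiv

end Blocks

end GFDM

open GFDM

theorem stmt1_general (K M : ℕ) (hK : 0 < K) (hM : 0 < M) (g : Fin (K * M) → ℂ)
    (g1 : Fin M → ℂ) (l : ℕ)
    (hgf : ((Real.sqrt (K * M) : ℝ) : ℂ) • (dftMat (K * M)).mulVec g
      = (cycPow (K * M) (l : ℤ)).mulVec (pad (K * M) M g1)) :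
    cycPow (K * M) (-(l : ℤ)) * dftMat (K * M) * gfdm K M hK hM g
      = (((Real.sqrt K : ℝ) : ℂ))⁻¹ •
        (piAB K M *
          castM (Nat.mul_comm M K) (Nat.mul_comm M K)
            (kron (Matrix.diagonal g1 * cycPow M (-(l : ℤ)) * dftMat M)
              (1 : Matrix (Fin K) (Fin K) ℂ))) := by
  have : NeZero K := ⟨hK.ne'⟩
  have : NeZero M := ⟨hM.ne'⟩
  rw [← Nat.cast_mul] at hgf
  ext r c
  obtain ⟨r', hr'⟩ := exists_natCast_val_eq ((r.val : ZMod (K * M)) + (l : ZMod (K * M)))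
  obtain ⟨u, hu⟩ := exists_natCast_val_eq
    ((r'.val : ZMod (K * M)) - (M : ZMod (K * M)) * ((c.val % K : ℕ) : ZMod (K * M)))
  obtain ⟨w, hw⟩ := exists_natCast_val_eq ((u.val : ZMod (K * M)) - (l : ZMod (K * M)))
  obtain ⟨p, hp⟩ := exists_natCast_val_eq (((r.val % M : ℕ) : ZMod M) + (l : ZMod M))
  have hwr : (w.val : ZMod (K * M)) = r.val - M * ((c.val % K : ℕ) : ZMod (K * M)) := by
    rw [hw, hu, hr']
    ring
  rw [Matrix.mul_assoc, cycPow_mul_apply _ _ (j := r') (by push_cast; rw [hr']; ring),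
    Matrix.smul_apply, piAB_mul_castM_kron_one_apply, Matrix.mul_assoc, diagonal_mul,
    cycPow_mul_apply _ _ (j := p) (by push_cast; rw [hp]; ring)]
  change (dftMat (K * M) *ᵥ fun n => gfdm K M hK hM g n c) r' = _
  simp_rw [gfdm_apply]
  rw [dftMat_mulVec_modulate_shift _ _ _ hu,
    dftMat_mulVec_apply_of_smul_eq_cycPow_mulVec hgf (by exact_mod_cast hw),
    pad_apply_of_natCast_eq g1 (Nat.mod_lt _ hK) hwr]
  split_ifs
  · rw [dftMat_apply, Fin.val_mk, Fin.val_mk, hu, hr', hp, ZMod.natCast_mod, ← Nat.cast_add,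
      ← Nat.cast_add, stdAddChar_block_phase, Nat.cast_mul,
      Real.sqrt_mul (Nat.cast_nonneg K), Complex.ofReal_mul, smul_eq_mul]
    ring
  · simp

/-- if the frequency-domain prototype filter `g_f = √D · W_D · g`
satisfies `g_f = Π_D^l [g₁ᵀ, 0ᵀ_{(K-1)M}]ᵀ` for some `g₁ ∈ ℂ^M` and `0 ≤ l < D`
(`D = KM`), then the GFDM transmitter matrix `A` satisfies
`Π_D^{-l} · W_D · A = (1/√K) · Π_{KM} · (diag(g₁) · Π_M^{-l} · W_M ⊗ I_K)`. -/
theorem stmt1 (K M : ℕ) (hK : 0 < K) (hM : 0 < M) (g : Fin (K * M) → ℂ)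
    (g1 : Fin M → ℂ) (l : ℕ) (hl : l < K * M)
    (hgf : ((Real.sqrt (K * M) : ℝ) : ℂ) • (dftMat (K * M)).mulVec g
      = (cycPow (K * M) (l : ℤ)).mulVec (pad (K * M) M g1)) :
    cycPow (K * M) (-(l : ℤ)) * dftMat (K * M) * gfdm K M hK hM g
      = (((Real.sqrt K : ℝ) : ℂ))⁻¹ •
        (piAB K M *
          castM (Nat.mul_comm M K) (Nat.mul_comm M K)
            (kron (Matrix.diagonal g1 * cycPow M (-(l : ℤ)) * dftMat M)
              (1 : Matrix (Fin K) (Fin K) ℂ))) :=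
  stmt1_general K M hK hM g g1 l hgf
end
end

section
/- Let K, M be positive integers, D = KM, and let g ∈ ℂ^D be a prototype filter whose frequency-domain version g_f = √D · W_D · g satisfies g_f = Π_D^l · [g_1^T, 0^T_{(K−1)M}]^T for some g_1 ∈ ℂ^M and integer 0 ≤ l < D. Let H ∈ ℂ^{D×D} be any circulant matrix with first column h, and let h_f = √D · W_D · h. Then Π_D^{−l} · W_D · H · A = blkdiag({E_k}_{k=0}^{K−1}) · Π_{KM}, where for each 0 ≤ k < K the M×M matrix E_k = (1/√K) · diag( [I_M selecting rows kM, …, kM+M−1 of Π_D^{−l} h_f] ) · diag(g_1) · Π_M^{−l} · W_M, i.e., E_k is (1/√K) times the diagonal matrix formed by the k-th length-M segment of Π_D^{−l} h_f, multiplied by diag(g_1) · Π_M^{−l} · W_M. -/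
open Matrix Complex

noncomputable section

/-!
The DFT diagonalises every circulant matrix, `W_D H = diag(h_f) W_D`, so only `W_D A` has to be
computed. Column `mK + k` of `A` is `g` cyclically shifted by `mK` and modulated by the frequency
`kM`, so its DFT is `g_f` shifted by `kM` times the phase `e^{-2πi (r - kM) mK / D}`. By the
hypothesis on `g_f`, after undoing the shift by `l` this column is supported on the `k`-th block of
length `M`, where it is `g₁`; and the phase depends on `r` only modulo `M`, where it is an entry of
`√M W_M`. Hence the columns of `Π_D^{-l} W_D H A` are, up to the permutation `Π_{KM}`, those of a
block-diagonal matrix.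
-/

open Fin.CommRing

local notation "𝕖" => ZMod.stdAddChar

theorem ZMod.finEquiv_apply {n : ℕ} [NeZero n] (i : Fin n) :
    ZMod.finEquiv n i = (i.val : ZMod n) := by
  obtain _ | n := n
  · exact absurd rfl (NeZero.ne 0)
  · exact (Fin.cast_val_eq_self i).symm

theorem ZMod.stdAddChar_natCast {N : ℕ} [NeZero N] (j : ℕ) :
    𝕖 (j : ZMod N) = exp (2 * Real.pi * I * j / N) := by
  simpa using ZMod.stdAddChar_coe (N := N) j

section Cyclic

variable {n : ℕ} [NeZero n]

local notation "ι" => ZMod.finEquiv n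

theorem cycPow_apply (s : ℤ) (i j : Fin n) : cycPow n s i j = if j = i - s then 1 else 0 := by
  have key : ((i.val : ZMod n) = j.val + s) ↔ j = i - s := by
    rw [← (ZMod.finEquiv n).injective.eq_iff, map_sub, map_intCast, ZMod.finEquiv_apply,
      ZMod.finEquiv_apply, eq_sub_iff_add_eq, eq_comm]
  simp only [cycPow, of_apply, key]

theorem cycPow_mulVec (s : ℤ) (v : Fin n → ℂ) (i : Fin n) :
    (cycPow n s *ᵥ v) i = v (i - s) := by
  simp [mulVec, dotProduct, cycPow_apply]

theorem cycPow_mul_apply {α : Type*} (s : ℤ) (X : Matrix (Fin n) α ℂ) (i : Fin n) (j : α) :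
    (cycPow n s * X) i j = X (i - s) j := by
  simp [mul_apply, cycPow_apply]

theorem dftMat_apply (m k : Fin n) : dftMat n m k = 𝕖 (-(ι m * ι k)) / (√n : ℝ) := by
  rw [ZMod.finEquiv_apply, ZMod.finEquiv_apply, ← Nat.cast_mul, ← Int.cast_natCast,
    ← Int.cast_neg, ZMod.stdAddChar_coe]
  simp only [dftMat, of_apply]
  congr 2
  push_cast
  ring

theorem dftMat_mul_circulant (h : Fin n → ℂ) :
    dftMat n * circulant h = diagonal (((√n : ℝ) : ℂ) • dftMat n *ᵥ h) * dftMat n := by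
  have hn : ((√n : ℝ) : ℂ) ≠ 0 := by simp [NeZero.ne n]
  ext r c
  rw [mul_apply, diagonal_mul, ← Equiv.sum_comp (Equiv.addRight c)]
  simp only [Equiv.coe_addRight, circulant_apply, add_sub_cancel_right, Pi.smul_apply, smul_eq_mul,
    mulVec, dotProduct, Finset.mul_sum, Finset.sum_mul]
  refine Finset.sum_congr rfl fun s _ => ?_
  simp only [dftMat_apply, map_add, mul_add, neg_add, AddChar.map_add_eq_mul]
  field_simp

theorem dftMat_mulVec_modulate_shift (g : Fin n → ℂ) (a b r : Fin n) :
    (dftMat n *ᵥ fun t => 𝕖 (ι a * ι t) * g (t - b)) r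
      = 𝕖 (-(ι (r - a) * ι b)) * (dftMat n *ᵥ g) (r - a) := by
  simp only [mulVec, dotProduct, Finset.mul_sum]
  rw [← Equiv.sum_comp (Equiv.addRight b)]
  refine Finset.sum_congr rfl fun s _ => ?_
  simp only [Equiv.coe_addRight, add_sub_cancel_right, dftMat_apply, map_add, map_sub]
  have hphase : 𝕖 (-(ι r * (ι s + ι b))) * 𝕖 (ι a * (ι s + ι b))
      = 𝕖 (-((ι r - ι a) * ι b)) * 𝕖 (-((ι r - ι a) * ι s)) := by
    simp only [← AddChar.map_add_eq_mul]
    ring_nf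
  linear_combination (g s / (√n : ℝ)) * hphase

end Cyclic

section GFDM

variable {K M : ℕ} [NeZero K] [NeZero M]

local notation "ι" => ZMod.finEquiv (K * M)

theorem stdAddChar_mul_natCast (y : ZMod (K * M)) :
    𝕖 (y * (K : ZMod (K * M))) = 𝕖 (ZMod.castHom (dvd_mul_left M K) (ZMod M) y) := by
  rw [← ZMod.intCast_zmod_cast y, map_intCast, ← Int.cast_natCast K, ← Int.cast_mul,
    ZMod.stdAddChar_coe, ZMod.stdAddChar_coe]
  have hK : (K : ℂ) ≠ 0 := NeZero.ne _
  congr 1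
  push_cast
  field_simp

theorem gfdm_apply (g : Fin (K * M) → ℂ) (t j : Fin (K * M)) :
    gfdm K M (NeZero.pos K) (NeZero.pos M) g t j
      = 𝕖 (((j.val % K * M : ℕ) : ZMod (K * M)) * ι t)
        * g (t - ((j.val / K * K : ℕ) : Fin (K * M))) := by
  have hshift : j.val / K * K ≤ t.val + K * M := (Nat.div_mul_le_self _ _).trans (by omega)
  have hidx : (⟨(t.val + K * M - j.val / K * K) % (K * M), Nat.mod_lt _ (NeZero.pos _)⟩
      : Fin (K * M)) = t - ((j.val / K * K : ℕ) : Fin (K * M)) := by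
    apply (ZMod.finEquiv (K * M)).injective
    rw [map_sub, map_natCast, ZMod.finEquiv_apply, ZMod.finEquiv_apply, ZMod.natCast_mod,
      Nat.cast_sub hshift, Nat.cast_add, ZMod.natCast_self, add_zero]
  have hK : (K : ℂ) ≠ 0 := NeZero.ne _
  have hM : (M : ℂ) ≠ 0 := NeZero.ne _
  rw [gfdm, of_apply, hidx, mul_comm, ZMod.finEquiv_apply, ← Nat.cast_mul,
    ZMod.stdAddChar_natCast]
  congr 2
  push_cast
  field_simp

theorem dftMat_mul_gfdm_apply (g : Fin (K * M) → ℂ) (r j : Fin (K * M)) :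
    (dftMat (K * M) * gfdm K M (NeZero.pos K) (NeZero.pos M) g) r j
      = 𝕖 (-(ι (r - ((j.val % K * M : ℕ) : Fin (K * M)))
          * ((j.val / K * K : ℕ) : ZMod (K * M))))
        * (dftMat (K * M) *ᵥ g) (r - ((j.val % K * M : ℕ) : Fin (K * M))) := by
  have h := dftMat_mulVec_modulate_shift g ((j.val % K * M : ℕ) : Fin (K * M))
    ((j.val / K * K : ℕ) : Fin (K * M)) r
  simp only [map_natCast] at h
  rw [← h, mul_apply]
  simp only [mulVec, dotProduct, gfdm_apply]

theorem stdAddChar_gfdm_phase (i : Fin (K * M)) (l k : ℕ) (m : Fin M) :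
    𝕖 (-(ι (i - ((k * M : ℕ) : Fin (K * M)) + l) * ((m.val * K : ℕ) : ZMod (K * M))))
      = 𝕖 (-(ZMod.finEquiv M (i.modNat + l) * ZMod.finEquiv M m)) := by
  rw [Nat.cast_mul m.val K, ← mul_assoc, ← neg_mul, stdAddChar_mul_natCast]
  simp only [map_neg, map_mul, map_sub, map_add, map_natCast, ZMod.finEquiv_apply, Fin.coe_modNat,
    ZMod.natCast_mod, Nat.cast_mul k M, ZMod.natCast_self, mul_zero, sub_zero]

theorem pad_sub_blockStart (g1 : Fin M → ℂ) (i : Fin (K * M)) (k : Fin K) :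
    pad (K * M) M g1 (i - ((k.val * M : ℕ) : Fin (K * M)))
      = if i.divNat = k then g1 i.modNat else 0 := by
  set t := i - ((k.val * M : ℕ) : Fin (K * M)) with ht
  have hblock : k.val * M + M ≤ K * M := by nlinarith [k.isLt]
  have hkM : k.val * M < K * M := by nlinarith [NeZero.pos M]
  by_cases htM : t.val < M
  · have hi : i.val = k.val * M + t.val := by
      rw [show i = ((k.val * M : ℕ) : Fin (K * M)) + t by rw [ht]; abel, Fin.val_add,
        Fin.val_natCast, Nat.mod_eq_of_lt hkM, Nat.mod_eq_of_lt (by omega)]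
    have hdiv : i.divNat = k := Fin.ext <| by
      rw [Fin.coe_divNat, hi, Nat.mul_comm, Nat.mul_add_div (NeZero.pos M), Nat.div_eq_of_lt htM,
        add_zero]
    have hmod : i.modNat = ⟨t.val, htM⟩ := Fin.ext <| by
      rw [Fin.coe_modNat, hi, Nat.mul_comm, Nat.mul_add_mod, Nat.mod_eq_of_lt htM]
    simp [pad, htM, hdiv, hmod]
  · have hdiv : i.divNat ≠ k := by
      rintro rfl
      have hle : ((i.divNat.val * M : ℕ) : Fin (K * M)) ≤ i := by
        rw [Fin.le_def, Fin.val_natCast, Nat.mod_eq_of_lt hkM, Fin.coe_divNat]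
        exact Nat.div_mul_le_self _ _
      have hsub := Fin.coe_sub_iff_le.mpr hle
      rw [← ht, Fin.val_natCast, Nat.mod_eq_of_lt hkM, Fin.coe_divNat,
        ← Nat.mod_eq_sub_div_mul] at hsub
      exact htM (hsub ▸ Nat.mod_lt _ (NeZero.pos M))
    simp [pad, htM, hdiv]

end GFDM

section Blocks

variable {A B : ℕ}

theorem piAB_apply_eq_ite [NeZero A] (q j : Fin (A * B)) :
    piAB A B q j = if q = finProdFinEquiv (⟨j.val % A, Nat.mod_lt _ (NeZero.pos A)⟩,
      ⟨j.val / A, Nat.div_lt_of_lt_mul j.isLt⟩) then 1 else 0 := by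
  simp only [piAB, of_apply, ← Equiv.symm_apply_eq, finProdFinEquiv_symm_apply, Prod.ext_iff,
    Fin.ext_iff, Fin.coe_divNat, Fin.coe_modNat]

theorem mul_piAB_apply [NeZero A] {α : Type*} (X : Matrix α (Fin (A * B)) ℂ) (i : α)
    (j : Fin (A * B)) :
    (X * piAB A B) i j = X i (finProdFinEquiv (⟨j.val % A, Nat.mod_lt _ (NeZero.pos A)⟩,
      ⟨j.val / A, Nat.div_lt_of_lt_mul j.isLt⟩)) := by
  simp [mul_apply, piAB_apply_eq_ite]

theorem blkdiag_apply_finProdFinEquiv {a b : ℕ} (F : Fin A → Matrix (Fin a) (Fin b) ℂ)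
    (i : Fin (A * a)) (k : Fin A) (m : Fin b) :
    blkdiag F i (finProdFinEquiv (k, m)) = if i.divNat = k then F k i.modNat m else 0 := by
  have hk : (finProdFinEquiv (k, m)).divNat = k :=
    congrArg Prod.fst (finProdFinEquiv.symm_apply_apply (k, m))
  have hm : (finProdFinEquiv (k, m)).modNat = m :=
    congrArg Prod.snd (finProdFinEquiv.symm_apply_apply (k, m))
  simp only [blkdiag, of_apply, hk, hm]
  split_ifs with hik
  · rw [hik]
  · rfl

theorem seg_divNat_modNat {a : ℕ} (v : Fin (A * a) → ℂ) (i : Fin (A * a)) :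
    seg v i.divNat i.modNat = v i :=
  congrArg v (Fin.ext (Nat.div_add_mod' i.val a))

end Blocks

theorem stmt2_general (K M : ℕ) (hK : 0 < K) (hM : 0 < M) (g : Fin (K * M) → ℂ)
    (g1 : Fin M → ℂ) (l : ℕ)
    (hgf : ((Real.sqrt (K * M) : ℝ) : ℂ) • (dftMat (K * M)).mulVec g
      = (cycPow (K * M) (l : ℤ)).mulVec (pad (K * M) M g1))
    (h : Fin (K * M) → ℂ) (H : Matrix (Fin (K * M)) (Fin (K * M)) ℂ)
    (hH : H = Matrix.circulant h) :
    cycPow (K * M) (-(l : ℤ)) * dftMat (K * M) * H * gfdm K M hK hM g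
      = blkdiag (fun k : Fin K =>
          (((Real.sqrt K : ℝ) : ℂ))⁻¹ •
            (Matrix.diagonal
                (seg ((cycPow (K * M) (-(l : ℤ))).mulVec
                  (((Real.sqrt (K * M) : ℝ) : ℂ) • (dftMat (K * M)).mulVec h)) k) *
              Matrix.diagonal g1 * cycPow M (-(l : ℤ)) * dftMat M)) *
        piAB K M := by
  have : NeZero K := ⟨hK.ne'⟩
  have : NeZero M := ⟨hM.ne'⟩
  have hsqrt : ((√(K * M : ℝ) : ℝ) : ℂ) = ((√(K * M : ℕ) : ℝ) : ℂ) := by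
    push_cast
    rfl
  have hsqrt' : ((√(K * M : ℝ) : ℝ) : ℂ) = (√K : ℝ) * (√M : ℝ) := by
    rw [Real.sqrt_mul (Nat.cast_nonneg K), Complex.ofReal_mul]
  have hD : ((√(K * M : ℝ) : ℝ) : ℂ) ≠ 0 := by simp [hK.ne', hM.ne']
  have hg : ∀ x, (dftMat (K * M) *ᵥ g) x
      = pad (K * M) M g1 (x - l) / (√(K * M : ℝ) : ℝ) := by
    intro x
    have hx := congrFun hgf x
    rw [Pi.smul_apply, smul_eq_mul, cycPow_mulVec, Int.cast_natCast] at hx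
    rw [← hx, mul_div_cancel_left₀ _ hD]
  subst hH
  ext i j
  rw [mul_piAB_apply, blkdiag_apply_finProdFinEquiv, Matrix.mul_assoc, Matrix.mul_assoc,
    ← Matrix.mul_assoc (dftMat _), dftMat_mul_circulant, ← hsqrt, Matrix.mul_assoc,
    cycPow_mul_apply, diagonal_mul, dftMat_mul_gfdm_apply, hg]
  simp only [Int.cast_neg, Int.cast_natCast, sub_neg_eq_add,
    add_sub_right_comm _ (l : Fin (K * M)), sub_add_cancel]
  have hk := pad_sub_blockStart g1 i ⟨j.val % K, Nat.mod_lt _ hK⟩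
  dsimp only at hk
  rw [hk, stdAddChar_gfdm_phase i l (j % K) ⟨j / K, Nat.div_lt_of_lt_mul j.isLt⟩]
  split_ifs with hik
  · rw [← hik]
    simp only [Matrix.smul_apply, Matrix.mul_assoc, diagonal_mul, cycPow_mul_apply,
      seg_divNat_modNat, cycPow_mulVec, Int.cast_neg, Int.cast_natCast, sub_neg_eq_add,
      dftMat_apply, smul_eq_mul]
    rw [hsqrt']
    field_simp
  · simp

/-- under the ICI-free hypothesis on `g`, for any circulant channel
matrix `H` with first column `h` and `h_f = √D · W_D · h`, one has
`Π_D^{-l} · W_D · H · A = blkdiag({E_k}_{k=0}^{K-1}) · Π_{KM}` with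
`E_k = (1/√K) · diag(k-th length-M segment of Π_D^{-l} h_f) · diag(g₁) · Π_M^{-l} · W_M`. -/
theorem stmt2 (K M : ℕ) (hK : 0 < K) (hM : 0 < M) (g : Fin (K * M) → ℂ)
    (g1 : Fin M → ℂ) (l : ℕ) (hl : l < K * M)
    (hgf : ((Real.sqrt (K * M) : ℝ) : ℂ) • (dftMat (K * M)).mulVec g
      = (cycPow (K * M) (l : ℤ)).mulVec (pad (K * M) M g1))
    (h : Fin (K * M) → ℂ) (H : Matrix (Fin (K * M)) (Fin (K * M)) ℂ)
    (hH : H = Matrix.circulant h) :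
    cycPow (K * M) (-(l : ℤ)) * dftMat (K * M) * H * gfdm K M hK hM g
      = blkdiag (fun k : Fin K =>
          (((Real.sqrt K : ℝ) : ℂ))⁻¹ •
            (Matrix.diagonal
                (seg ((cycPow (K * M) (-(l : ℤ))).mulVec
                  (((Real.sqrt (K * M) : ℝ) : ℂ) • (dftMat (K * M)).mulVec h)) k) *
              Matrix.diagonal g1 * cycPow M (-(l : ℤ)) * dftMat M)) *
        piAB K M :=
  stmt2_general K M hK hM g g1 l hgf h H hH
end
end

section
/- OFDM special case: Let M = 1, so D = K, and let g ∈ ℂ^D be a prototype filter whose frequency-domain version g_f = √D · W_D · g has exactly one (possibly) nonzero entry, namely [g_f]_l = c for some 0 ≤ l < D and c ∈ ℂ, with all other entries zero. Then the GFDM transmitter matrix A of g satisfies A = (c/√K) · W_D^H · Π_D^{l}. In particular, every column of A is a scalar multiple of a column of the inverse DFT matrix W_D^H, so the GFDM system reduces to OFDM. -/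
open Matrix Complex

noncomputable section

/-!
The normalized DFT matrix is unitary, so the hypothesis says that `g` is the inverse DFT of a
single spike: `g n = (c / K) ζ^(l n)` with `ζ = e^(2πi/K)`. Modulating by the subcarrier
`ζ^(j n)` gives `ζ^((j + l) n)`, which is column `j + l (mod K)` of `√K · W_Kᴴ`, and right
multiplication by `Π_K^l` is exactly that shift of columns.
-/

lemma IsPrimitiveRoot.sum_pow_mul_inv_pow {F : Type*} [Field F] {ζ : F} {p : ℕ}
    (hζ : IsPrimitiveRoot ζ p) {a b : ℕ} (ha : a < p) (hb : b < p) :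
    ∑ m ∈ Finset.range p, ζ ^ (a * m) * (ζ ^ (b * m))⁻¹
      = if a = b then (p : F) else 0 := by
  have hζ0 : ζ ≠ 0 := hζ.ne_zero (by omega)
  set x := ζ ^ a * (ζ ^ b)⁻¹
  have hgeom : ∀ m, ζ ^ (a * m) * (ζ ^ (b * m))⁻¹ = x ^ m := fun m => by
    rw [mul_pow, inv_pow, ← pow_mul, ← pow_mul]
  simp only [hgeom]
  split_ifs with hab
  · simp [x, hab, hζ0]
  · have hx : x ≠ 1 := fun h =>
      hab (hζ.pow_inj ha hb (by rwa [mul_inv_eq_one₀ (pow_ne_zero _ hζ0)] at h))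
    have hxp : x ^ p = 1 := by
      rw [← hgeom, mul_comm a, mul_comm b, pow_mul, pow_mul, hζ.pow_eq_one, one_pow, one_pow,
        inv_one, mul_one]
    rw [geom_sum_eq hx, hxp, sub_self, zero_div]

lemma ofReal_sqrt_mul_self_natCast (p : ℕ) : (Real.sqrt p : ℂ) * Real.sqrt p = p := by
  rw [← Complex.ofReal_mul, Real.mul_self_sqrt (Nat.cast_nonneg p), Complex.ofReal_natCast]

def dftRoot (p : ℕ) : ℂ := Complex.exp (2 * Real.pi * Complex.I / p)

lemma dftRoot_pow_self (p : ℕ) : dftRoot p ^ p = 1 := by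
  rcases eq_or_ne p 0 with rfl | hp
  · exact pow_zero _
  · exact (Complex.isPrimitiveRoot_exp p hp).pow_eq_one

lemma dftRoot_pow_eq_pow_of_natCast_eq {p a b : ℕ} (h : (a : ZMod p) = b) :
    dftRoot p ^ a = dftRoot p ^ b :=
  pow_eq_pow_of_modEq ((ZMod.natCast_eq_natCast_iff a b p).1 h) (dftRoot_pow_self p)

lemma star_dftRoot (p : ℕ) : star (dftRoot p) = (dftRoot p)⁻¹ := by
  rw [dftRoot, RCLike.star_def, ← Complex.exp_conj, ← Complex.exp_neg]
  congr 1
  simp only [map_div₀, map_mul, map_ofNat, conj_ofReal, conj_I, mul_neg, map_natCast]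
  ring

lemma cexp_two_pi_I_mul_mul_div (p a b : ℕ) :
    Complex.exp (2 * Real.pi * Complex.I * a * b / p) = dftRoot p ^ (a * b) := by
  rw [dftRoot, ← Complex.exp_nat_mul]
  congr 1
  push_cast
  ring

lemma dftMat_apply_s9 (p : ℕ) (m n : Fin p) :
    dftMat p m n = (dftRoot p ^ (m.val * n.val))⁻¹ / (Real.sqrt p : ℂ) := by
  rw [dftMat, of_apply, ← cexp_two_pi_I_mul_mul_div, ← Complex.exp_neg]
  congr 2
  ring

lemma dftMat_conjTranspose_apply (p : ℕ) (m n : Fin p) :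
    (dftMat p)ᴴ m n = dftRoot p ^ (n.val * m.val) / (Real.sqrt p : ℂ) := by
  rw [conjTranspose_apply, dftMat_apply_s9, star_div₀, star_inv₀, star_pow, star_dftRoot, inv_pow,
    inv_inv, Complex.star_def, Complex.conj_ofReal]

lemma dftMat_conjTranspose_mul_self (p : ℕ) : (dftMat p)ᴴ * dftMat p = 1 := by
  ext a b
  have hp : p ≠ 0 := a.pos.ne'
  have hsum := (Complex.isPrimitiveRoot_exp p hp).sum_pow_mul_inv_pow a.isLt b.isLt
  rw [← Fin.sum_univ_eq_sum_range (fun m => _ ^ (a.val * m) * (_ ^ (b.val * m))⁻¹),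
    ← dftRoot] at hsum
  simp only [mul_apply, dftMat_conjTranspose_apply, dftMat_apply_s9, div_mul_div_comm,
    ← Finset.sum_div, ofReal_sqrt_mul_self_natCast, one_apply, Fin.ext_iff]
  simp only [mul_comm _ a.val, mul_comm _ b.val, hsum]
  split_ifs <;> simp [hp]

lemma apply_eq_of_smul_dftMat_mulVec_eq_single {p : ℕ} (g : Fin p → ℂ) {l : ℕ} (hl : l < p)
    (c : ℂ) (hgf : (Real.sqrt p : ℂ) • (dftMat p).mulVec g
      = fun i => if i.val = l then c else 0) (n : Fin p) :
    g n = c * dftRoot p ^ (l * n.val) / p := by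
  have hp : (Real.sqrt p : ℂ) ≠ 0 := by
    exact_mod_cast (Real.sqrt_pos.2 (by exact_mod_cast (show 0 < p by omega))).ne'
  have hinv : g = (dftMat p)ᴴ *ᵥ ((Real.sqrt p : ℂ)⁻¹ •
      fun i => if i.val = l then c else 0) := by
    rw [← hgf, inv_smul_smul₀ hp, mulVec_mulVec, dftMat_conjTranspose_mul_self, one_mulVec]
  rw [hinv, mulVec, dotProduct, Finset.sum_eq_single_of_mem ⟨l, hl⟩ (Finset.mem_univ _)]
  · simp only [Pi.smul_apply, smul_eq_mul, if_pos, dftMat_conjTranspose_apply]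
    rw [← ofReal_sqrt_mul_self_natCast]
    field_simp
  · intro i _ hi
    rw [Pi.smul_apply, if_neg (fun h => hi (Fin.ext h)), smul_zero, mul_zero]

def Fin.cycShift {p : ℕ} [NeZero p] (j : Fin p) (a : ZMod p) : Fin p :=
  ⟨((j : ZMod p) + a).val, ZMod.val_lt _⟩

lemma Fin.natCast_cycShift {p : ℕ} [NeZero p] (j : Fin p) (a : ZMod p) :
    ((j.cycShift a : ℕ) : ZMod p) = j + a :=
  ZMod.natCast_zmod_val _

lemma mul_cycPow_apply {ι : Type*} {p : ℕ} [NeZero p] (X : Matrix ι (Fin p) ℂ) (s : ℤ)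
    (n : ι) (j : Fin p) :
    (X * cycPow p s) n j = X n (j.cycShift s) := by
  rw [mul_apply, Finset.sum_eq_single_of_mem (j.cycShift s) (Finset.mem_univ _)]
  · rw [cycPow, of_apply, if_pos (Fin.natCast_cycShift j s), mul_one]
  · intro m _ hm
    rw [cycPow, of_apply, if_neg, mul_zero]
    intro h
    exact hm (Fin.ext (by simp only [Fin.cycShift, ← h, ZMod.val_cast_of_lt m.isLt]))

lemma dftMat_conjTranspose_apply_cycShift {p : ℕ} [NeZero p] (n j : Fin p) (a : ZMod p) :
    (dftMat p)ᴴ n (j.cycShift a) = dftRoot p ^ (a.val * n.val) * (dftMat p)ᴴ n j := by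
  simp only [dftMat_conjTranspose_apply, Fin.cycShift, ← mul_div_assoc, ← pow_add, ← add_mul]
  congr 1
  apply dftRoot_pow_eq_pow_of_natCast_eq
  push_cast
  simp only [ZMod.natCast_val, ZMod.cast_id', id, add_comm]

lemma gfdm_one_apply (K : ℕ) (hK : 0 < K) (g : Fin (K * 1) → ℂ) (n j : Fin (K * 1)) :
    gfdm K 1 hK one_pos g n j = g n * dftRoot K ^ (j.val * n.val) := by
  have hj : j.val < K := by omega
  have hn : (n.val + K * 1 - j.val / K * K) % (K * 1) = n.val := by
    rw [Nat.div_eq_of_lt hj, zero_mul, Nat.sub_zero, Nat.add_mod_right, Nat.mod_eq_of_lt n.isLt]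
  simp only [gfdm, of_apply, hn, Nat.mod_eq_of_lt hj, cexp_two_pi_I_mul_mul_div]

/-- OFDM special case: let `M = 1` (so `D = K`) and suppose the
frequency-domain prototype filter `g_f = √D · W_D · g` has its only (possibly) nonzero
entry `[g_f]_l = c` (`0 ≤ l < D`).  Then the GFDM transmitter matrix of `g` is
`A = (c/√K) · W_Dᴴ · Π_D^l`; in particular every column of `A` is a scalar multiple of
a column of `W_Dᴴ`, i.e. the GFDM system reduces to OFDM. -/
theorem stmt9 (K : ℕ) (hK : 0 < K) (g : Fin (K * 1) → ℂ) (l : ℕ) (hl : l < K * 1)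
    (c : ℂ)
    (hgf : ((Real.sqrt (K * 1) : ℝ) : ℂ) • (dftMat (K * 1)).mulVec g
      = fun i => if i.val = l then c else 0) :
    gfdm K 1 hK one_pos g
      = (c / ((Real.sqrt K : ℝ) : ℂ)) • ((dftMat (K * 1))ᴴ * cycPow (K * 1) (l : ℤ)) ∧
    ∀ j : Fin (K * 1), ∃ (s : ℂ) (p : Fin (K * 1)),
      (fun n => gfdm K 1 hK one_pos g n j) = fun n => s * (dftMat (K * 1))ᴴ n p := by
  have : NeZero (K * 1) := ⟨by omega⟩
  have hg := apply_eq_of_smul_dftMat_mulVec_eq_single g hl c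
    (by rwa [Nat.cast_mul, Nat.cast_one])
  have hA : ∀ n j : Fin (K * 1), gfdm K 1 hK one_pos g n j
      = c / (Real.sqrt K : ℂ) * (dftMat (K * 1))ᴴ n (j.cycShift (l : ℤ)) := by
    intro n j
    rw [gfdm_one_apply, hg, dftMat_conjTranspose_apply_cycShift, dftMat_conjTranspose_apply,
      Int.cast_natCast, ZMod.val_cast_of_lt hl]
    simp only [Nat.mul_one]
    rw [← ofReal_sqrt_mul_self_natCast K]
    field_simp
  constructor
  · ext n j
    rw [Matrix.smul_apply, smul_eq_mul, mul_cycPow_apply, hA]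
  · exact fun j => ⟨_, _, funext fun n => hA n j⟩
end
end
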